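/- Let S_A be a d×d Metzler sign-matrix and ℓ ≠ 1. The following are equivalent: (a) all matrices in Q(S_A) are Hurwitz stable, and for every A ∈ Q(S_A) there exists w ∈ ℝ^d_{≥0} with w₁ > 0 and wᵀA + e_ℓᵀ = 0; (b) the diagonal entries of S_A are negative and the digraph G_{S_A} is acyclic and contains a directed path from node 1 to node ℓ. -/

import Mathlib

open Matrix

variable {d : ℕ}

/-- A real square matrix is Metzler if all its off-diagonal entries are nonnegative. -/
def Metzler (M : Matrix (Fin d) (Fin d) ℝ) : Prop :=
  ∀ i j, i ≠ j → 0 ≤ M i j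

/-- A real square matrix is Hurwitz stable if all its (complex) eigenvalues,
i.e. all roots of its characteristic polynomial, have strictly negative real part. -/
def IsHurwitz (M : Matrix (Fin d) (Fin d) ℝ) : Prop :=
  ∀ z : ℂ, (M.map (Complex.ofReal)).charpoly.IsRoot z → z.re < 0

/-- The directed graph associated with a matrix: edge from `m` to `n` iff `m ≠ n`
and the `(n, m)` entry of `M` is nonzero. -/
def edgeRel (M : Matrix (Fin d) (Fin d) ℝ) (m n : Fin d) : Prop :=
  m ≠ n ∧ M n m ≠ 0

/-!
For an acyclic pattern every nonidentity permutation meets a zero entry, so the determinant and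
the characteristic polynomial of any realisation `A` are those of its diagonal. Hence `A` is
Hurwitz iff its diagonal is negative, and then `A` is invertible; reading `wᵀA = -e_ℓᵀ` column by
column along the acyclic order gives `w ≥ 0`, with `w j > 0` if `j` reaches `ℓ` and `w j = 0` if it
does not.

A cycle is ruled out by weighting the entries of `S` so that the indicator of the vertices
reachable from the cycle becomes an eigenvector with eigenvalue `2`. Once the graph is acyclic,
stability of `S` itself forces `S i i = -1`, and `w 0 > 0` forces a path from `0` to `ℓ`.
-/

open Polynomial Relation

theorem wellFounded_flip_of_acyclic {α : Type*} [Finite α] {r : α → α → Prop}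
    (hr : ∀ a, ¬TransGen r a a) : WellFounded (flip r) := by
  have : Std.Irrefl (TransGen (flip r)) := ⟨fun a h => hr a (transGen_swap.mp h)⟩
  exact (Finite.wellFounded_of_trans_of_irrefl _).mono fun _ _ => TransGen.single

theorem Equiv.Perm.transGen_self_of_apply_ne {α : Type*} [Fintype α] [DecidableEq α]
    {r : α → α → Prop} {τ : Equiv.Perm α} (hτ : ∀ x, τ x ≠ x → r x (τ x)) {x : α}
    (hx : τ x ≠ x) : TransGen r x x := by
  have hpow : ∀ k, TransGen r x ((τ ^ (k + 1)) x) := by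
    intro k
    induction k with
    | zero => simpa using TransGen.single (hτ x hx)
    | succ k ih =>
      have hmoved : τ ((τ ^ (k + 1)) x) ≠ (τ ^ (k + 1)) x :=
        mem_support.mp (pow_apply_mem_support.mpr (mem_support.mpr hx))
      rw [pow_succ', mul_apply]
      exact ih.tail (hτ _ hmoved)
  simpa [Nat.sub_add_cancel (orderOf_pos τ), pow_orderOf_eq_one] using hpow (orderOf τ - 1)

theorem Matrix.det_eq_prod_diag_of_acyclic {n R : Type*} [Fintype n] [DecidableEq n]
    [CommRing R] {r : n → n → Prop} (hr : ∀ a, ¬TransGen r a a) (B : Matrix n n R)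
    (hB : ∀ i j, i ≠ j → B i j ≠ 0 → r j i) : B.det = ∏ i, B i i := by
  rw [det_apply, Finset.sum_eq_single 1]
  · simp
  · intro τ _ hτ
    obtain ⟨j, hj⟩ : ∃ j, B (τ j) j = 0 := by
      by_contra! hne
      obtain ⟨x, hx⟩ : ∃ x, τ x ≠ x := not_forall.mp fun h => hτ (Equiv.ext h)
      exact hr x (Equiv.Perm.transGen_self_of_apply_ne (fun y hy => hB _ _ hy (hne y)) hx)
    rw [Finset.prod_eq_zero (f := fun i => B (τ i) i) (Finset.mem_univ j) hj, smul_zero]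
  · simp

theorem Real.sign_eq_self {x : ℝ} (h : x = -1 ∨ x = 0 ∨ x = 1) : Real.sign x = x := by
  rcases h with rfl | rfl | rfl
  · exact Real.sign_of_neg (by norm_num)
  · exact Real.sign_zero
  · exact Real.sign_one

theorem Real.sign_mul_of_pos {c : ℝ} (hc : 0 < c) (x : ℝ) :
    Real.sign (c * x) = Real.sign x := by
  rcases lt_trichotomy x 0 with hx | rfl | hx
  · rw [Real.sign_of_neg hx, Real.sign_of_neg (mul_neg_of_pos_of_neg hc hx)]
  · rw [mul_zero]
  · rw [Real.sign_of_pos hx, Real.sign_of_pos (mul_pos hc hx)]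

theorem Real.neg_of_sign_eq_neg_one {x : ℝ} (h : Real.sign x = -1) : x < 0 := by
  rcases lt_trichotomy x 0 with hx | rfl | hx
  · exact hx
  · norm_num [Real.sign_zero] at h
  · norm_num [Real.sign_of_pos hx] at h

theorem Real.nonneg_of_sign_nonneg {x : ℝ} (h : 0 ≤ Real.sign x) : 0 ≤ x := by
  by_contra! hx
  norm_num [Real.sign_of_neg hx] at h

theorem edgeRel_eq_of_sign_eq {A S : Matrix (Fin d) (Fin d) ℝ}
    (h : ∀ i j, Real.sign (A i j) = S i j) : edgeRel A = edgeRel S := by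
  ext m n
  simp only [edgeRel, ← h, Ne, Real.sign_eq_zero_iff]

theorem charpoly_map_ofReal_eq_prod_of_acyclic (A : Matrix (Fin d) (Fin d) ℝ)
    (hA : ∀ m, ¬TransGen (edgeRel A) m m) :
    (A.map Complex.ofReal).charpoly = ∏ i, (X - C (A i i : ℂ)) := by
  rw [charpoly, det_eq_prod_diag_of_acyclic hA]
  · simp [charmatrix_apply_eq]
  · intro i j hij h
    refine ⟨hij.symm, fun h0 => h ?_⟩
    simp [charmatrix_apply_ne _ _ _ hij, h0]

theorem isHurwitz_iff_of_acyclic (A : Matrix (Fin d) (Fin d) ℝ)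
    (hA : ∀ m, ¬TransGen (edgeRel A) m m) : IsHurwitz A ↔ ∀ i, A i i < 0 := by
  simp only [IsHurwitz, charpoly_map_ofReal_eq_prod_of_acyclic A hA, isRoot_prod, root_X_sub_C,
    Finset.mem_univ, true_and, forall_exists_index, forall_apply_eq_imp_iff, Complex.ofReal_re]

theorem not_isHurwitz_of_mulVec_eq_smul {A : Matrix (Fin d) (Fin d) ℝ} {v : Fin d → ℝ}
    {t : ℝ} (hv : v ≠ 0) (hAv : A *ᵥ v = t • v) (ht : 0 ≤ t) : ¬IsHurwitz A := by
  intro hA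
  have hdet : (scalar (Fin d) t - A).det = 0 :=
    exists_mulVec_eq_zero_iff.mp ⟨v, hv, by simp [sub_mulVec, hAv]⟩
  have hroot : (A.charpoly.map Complex.ofRealHom).IsRoot (t : ℂ) :=
    IsRoot.map (by rw [IsRoot, eval_charpoly, hdet])
  rw [← charpoly_map] at hroot
  have := hA t hroot
  rw [Complex.ofReal_re] at this
  linarith

/-- Row `i ∈ R` has positive off-diagonal weight `p i` on `R`, so scaling it by
`(2 - S i i) / p i` makes its sum over `R` equal to `2`; rows outside `R` vanish on `R` because
`R` is closed under out-edges. -/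
theorem exists_sign_eq_mulVec_indicator_eq (S : Matrix (Fin d) (Fin d) ℝ)
    (hsgn : ∀ i j, S i j = -1 ∨ S i j = 0 ∨ S i j = 1) (hMz : Metzler S) (R : Set (Fin d))
    (hin : ∀ i ∈ R, ∃ j ∈ R, edgeRel S j i) (hclosed : ∀ j ∈ R, ∀ i, edgeRel S j i → i ∈ R) :
    ∃ A : Matrix (Fin d) (Fin d) ℝ, (∀ i j, Real.sign (A i j) = S i j) ∧
      A *ᵥ R.indicator 1 = (2 : ℝ) • R.indicator 1 := by
  set v : Fin d → ℝ := R.indicator 1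
  set p : Fin d → ℝ := fun i => ∑ j, (if i = j then 0 else S i j) * v j
  set c : Fin d → ℝ := fun i => if 0 < p i then (2 - S i i) / p i else 1
  have hv : ∀ j, 0 ≤ v j := Set.indicator_nonneg fun _ _ => zero_le_one
  have hp_pos : ∀ i ∈ R, 0 < p i := by
    intro i hi
    obtain ⟨j, hj, hji, hS⟩ := hin i hi
    refine Finset.sum_pos' (fun k _ => ?_) ⟨j, Finset.mem_univ j, ?_⟩
    · split_ifs with hik
      · simp
      · exact mul_nonneg (hMz i k hik) (hv k)
    · rw [if_neg hji.symm, show v j = 1 from Set.indicator_of_mem hj 1, mul_one]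
      exact (hMz i j hji.symm).lt_of_ne' hS
  have hp_zero : ∀ i ∉ R, p i = 0 := by
    intro i hi
    refine Finset.sum_eq_zero fun j _ => ?_
    split_ifs with hij
    · simp
    · by_cases hj : j ∈ R
      · have hS : S i j = 0 := by
          by_contra hS
          exact hi (hclosed j hj i ⟨Ne.symm hij, hS⟩)
        simp [hS]
      · simp [v, Set.indicator_of_notMem hj]
  have hc : ∀ i, 0 < c i := by
    intro i
    by_cases hpi : 0 < p i
    · have : S i i ≤ 1 := by rcases hsgn i i with h | h | h <;> linarith
      simp only [c, if_pos hpi]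
      exact div_pos (by linarith) hpi
    · simp [c, hpi]
  refine ⟨of fun i j => if i = j then S i i else c i * S i j, ?_, ?_⟩
  · intro i j
    by_cases hij : i = j
    · subst hij
      simpa using Real.sign_eq_self (hsgn i i)
    · simp only [of_apply, if_neg hij, Real.sign_mul_of_pos (hc i)]
      exact Real.sign_eq_self (hsgn i j)
  · ext i
    have hrow : (of (fun i j => if i = j then S i i else c i * S i j) *ᵥ v) i =
        S i i * v i + c i * p i := by
      calc ∑ j, (if i = j then S i i else c i * S i j) * v j
          = ∑ j, ((if i = j then S i i * v j else 0)
              + c i * ((if i = j then 0 else S i j) * v j)) :=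
            Finset.sum_congr rfl fun j _ => by split_ifs <;> ring
        _ = S i i * v i + c i * p i := by
            rw [Finset.sum_add_distrib, Finset.sum_ite_eq, ← Finset.mul_sum]
            simp [p]
    rw [hrow, Pi.smul_apply, smul_eq_mul]
    by_cases hi : i ∈ R
    · have hpi := hp_pos i hi
      simp only [c, if_pos hpi, v, Set.indicator_of_mem hi, Pi.one_apply]
      field_simp
      ring
    · simp [v, Set.indicator_of_notMem hi, hp_zero i hi]

theorem exists_sign_eq_not_isHurwitz_of_transGen_self (S : Matrix (Fin d) (Fin d) ℝ)
    (hsgn : ∀ i j, S i j = -1 ∨ S i j = 0 ∨ S i j = 1) (hMz : Metzler S) {m : Fin d}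
    (hm : TransGen (edgeRel S) m m) :
    ∃ A : Matrix (Fin d) (Fin d) ℝ, (∀ i j, Real.sign (A i j) = S i j) ∧ ¬IsHurwitz A := by
  obtain ⟨A, hAS, hAv⟩ := exists_sign_eq_mulVec_indicator_eq S hsgn hMz
    {i | TransGen (edgeRel S) m i}
    (fun i hi => by
      obtain ⟨j, hmj, hji⟩ := TransGen.tail'_iff.mp hi
      exact ⟨j, hm.trans_left hmj, hji⟩)
    (fun j hj i hji => TransGen.tail hj hji)
  refine ⟨A, hAS, not_isHurwitz_of_mulVec_eq_smul (fun h => ?_) hAv zero_le_two⟩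
  simpa [Set.indicator_of_mem (show m ∈ {i | TransGen (edgeRel S) m i} from hm)] using
    congrFun h m

section LeftSolution

variable {A : Matrix (Fin d) (Fin d) ℝ} {w : Fin d → ℝ} {ℓ : Fin d}

theorem neg_diag_mul_eq_of_vecMul_add_single_eq_zero (hw : w ᵥ* A + Pi.single ℓ 1 = 0)
    (j : Fin d) :
    -A j j * w j = (Pi.single ℓ 1 : Fin d → ℝ) j + ∑ i ∈ Finset.univ.erase j, w i * A i j := by
  have h := congrFun hw j
  simp only [Pi.add_apply, Pi.zero_apply, vecMul, dotProduct] at h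
  rw [← Finset.add_sum_erase _ _ (Finset.mem_univ j)] at h
  linarith

theorem eq_zero_of_vecMul_add_single_eq_zero_of_not_reflTransGen (hdiag : ∀ i, A i i ≠ 0)
    (hac : ∀ m, ¬TransGen (edgeRel A) m m) (hw : w ᵥ* A + Pi.single ℓ 1 = 0) (j : Fin d)
    (hj : ¬ReflTransGen (edgeRel A) j ℓ) : w j = 0 := by
  induction j using (wellFounded_flip_of_acyclic hac).induction with
  | _ j ih =>
    have hsum : ∑ i ∈ Finset.univ.erase j, w i * A i j = 0 := by
      refine Finset.sum_eq_zero fun i hi => ?_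
      by_cases hA : A i j = 0
      · rw [hA, mul_zero]
      · have hji : edgeRel A j i := ⟨(Finset.ne_of_mem_erase hi).symm, hA⟩
        rw [ih i hji fun hiℓ => hj (hiℓ.head hji), zero_mul]
    have hjℓ : j ≠ ℓ := by
      rintro rfl
      exact hj ReflTransGen.refl
    have hcol := neg_diag_mul_eq_of_vecMul_add_single_eq_zero hw j
    rw [Pi.single_eq_of_ne hjℓ, hsum, add_zero] at hcol
    exact (mul_eq_zero.mp hcol).resolve_left (neg_ne_zero.mpr (hdiag j))

theorem nonneg_of_vecMul_add_single_eq_zero (hMz : Metzler A) (hdiag : ∀ i, A i i < 0)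
    (hac : ∀ m, ¬TransGen (edgeRel A) m m) (hw : w ᵥ* A + Pi.single ℓ 1 = 0) (j : Fin d) :
    0 ≤ w j := by
  induction j using (wellFounded_flip_of_acyclic hac).induction with
  | _ j ih =>
    have hsum : 0 ≤ ∑ i ∈ Finset.univ.erase j, w i * A i j := by
      refine Finset.sum_nonneg fun i hi => ?_
      have hij := Finset.ne_of_mem_erase hi
      by_cases hA : A i j = 0
      · rw [hA, mul_zero]
      · exact mul_nonneg (ih i ⟨hij.symm, hA⟩) (hMz i j hij)
    have hcol := neg_diag_mul_eq_of_vecMul_add_single_eq_zero hw j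
    have hsingle : (0 : ℝ) ≤ (Pi.single ℓ 1 : Fin d → ℝ) j := by
      rw [Pi.single_apply]; split_ifs <;> norm_num
    exact (mul_nonneg_iff_of_pos_left (neg_pos.mpr (hdiag j))).mp (by linarith)

theorem pos_of_vecMul_add_single_eq_zero_of_reflTransGen (hMz : Metzler A)
    (hdiag : ∀ i, A i i < 0) (hac : ∀ m, ¬TransGen (edgeRel A) m m)
    (hw : w ᵥ* A + Pi.single ℓ 1 = 0) {j : Fin d} (hj : ReflTransGen (edgeRel A) j ℓ) :
    0 < w j := by
  have hterm : ∀ j, ∀ i ∈ Finset.univ.erase j, 0 ≤ w i * A i j := fun j i hi =>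
    mul_nonneg (nonneg_of_vecMul_add_single_eq_zero hMz hdiag hac hw i)
      (hMz i j (Finset.ne_of_mem_erase hi))
  induction hj using ReflTransGen.head_induction_on with
  | refl =>
    have hcol := neg_diag_mul_eq_of_vecMul_add_single_eq_zero hw ℓ
    rw [Pi.single_eq_same] at hcol
    exact (mul_pos_iff_of_pos_left (neg_pos.mpr (hdiag ℓ))).mp
      (by linarith [Finset.sum_nonneg (hterm ℓ)])
  | @head j i hji _ ih =>
    have hcol := neg_diag_mul_eq_of_vecMul_add_single_eq_zero hw j
    have hle := Finset.single_le_sum (hterm j)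
      (Finset.mem_erase.mpr ⟨hji.1.symm, Finset.mem_univ i⟩)
    have hpos : 0 < w i * A i j := mul_pos ih ((hMz i j hji.1.symm).lt_of_ne' hji.2)
    have hsingle : (0 : ℝ) ≤ (Pi.single ℓ 1 : Fin d → ℝ) j := by
      rw [Pi.single_apply]; split_ifs <;> norm_num
    exact (mul_pos_iff_of_pos_left (neg_pos.mpr (hdiag j))).mp (by linarith)

theorem exists_vecMul_add_single_eq_zero (hdiag : ∀ i, A i i ≠ 0)
    (hac : ∀ m, ¬TransGen (edgeRel A) m m) (ℓ : Fin d) :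
    ∃ w : Fin d → ℝ, w ᵥ* A + Pi.single ℓ 1 = 0 := by
  have hdet : IsUnit A.det := by
    rw [det_eq_prod_diag_of_acyclic hac A fun i j hij h => ⟨hij.symm, h⟩, isUnit_iff_ne_zero]
    exact Finset.prod_ne_zero_iff.mpr fun i _ => hdiag i
  refine ⟨-(Pi.single ℓ 1 ᵥ* A⁻¹), ?_⟩
  rw [neg_vecMul, vecMul_vecMul, nonsing_inv_mul _ hdet, vecMul_one, neg_add_cancel]

end LeftSolution

theorem structural_ergodicity_iff [NeZero d] (S : Matrix (Fin d) (Fin d) ℝ)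
    (hsgn : ∀ i j, S i j = -1 ∨ S i j = 0 ∨ S i j = 1)
    (hMz : ∀ i j, i ≠ j → 0 ≤ S i j)
    (ℓ : Fin d) (hℓ : ℓ ≠ 0) :
    (∀ A : Matrix (Fin d) (Fin d) ℝ, (∀ i j, Real.sign (A i j) = S i j) →
        IsHurwitz A ∧
          ∃ w : Fin d → ℝ, (∀ i, 0 ≤ w i) ∧ 0 < w 0 ∧ w ᵥ* A + Pi.single ℓ 1 = 0)
    ↔ ((∀ i, S i i = -1) ∧ (∀ m, ¬ Relation.TransGen (edgeRel S) m m) ∧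
        Relation.TransGen (edgeRel S) 0 ℓ) := by
  constructor
  · intro h
    have hac : ∀ m, ¬TransGen (edgeRel S) m m := fun m hm => by
      obtain ⟨A, hAS, hA⟩ := exists_sign_eq_not_isHurwitz_of_transGen_self S hsgn hMz hm
      exact hA (h A hAS).1
    obtain ⟨hS, w, -, hw0, hw⟩ := h S fun i j => Real.sign_eq_self (hsgn i j)
    have hdiag : ∀ i, S i i = -1 := fun i => by
      have := (isHurwitz_iff_of_acyclic S hac).mp hS i
      rcases hsgn i i with h | h | h <;> linarith
    have hreach : ReflTransGen (edgeRel S) 0 ℓ := by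
      by_contra h0
      exact hw0.ne' (eq_zero_of_vecMul_add_single_eq_zero_of_not_reflTransGen
        (fun i => by simp [hdiag]) hac hw 0 h0)
    exact ⟨hdiag, hac, (reflTransGen_iff_eq_or_transGen.mp hreach).resolve_left hℓ⟩
  · rintro ⟨hdiag, hac, hpath⟩ A hAS
    rw [← edgeRel_eq_of_sign_eq hAS] at hac hpath
    have hAdiag : ∀ i, A i i < 0 := fun i =>
      Real.neg_of_sign_eq_neg_one ((hAS i i).trans (hdiag i))
    have hAMz : Metzler A := fun i j hij =>
      Real.nonneg_of_sign_nonneg ((hAS i j).symm ▸ hMz i j hij)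
    obtain ⟨w, hw⟩ := exists_vecMul_add_single_eq_zero (fun i => (hAdiag i).ne) hac ℓ
    exact ⟨(isHurwitz_iff_of_acyclic A hac).mpr hAdiag, w,
      nonneg_of_vecMul_add_single_eq_zero hAMz hAdiag hac hw,
      pos_of_vecMul_add_single_eq_zero_of_reflTransGen hAMz hAdiag hac hw hpath.to_reflTransGen,
      hw⟩
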